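/- arXiv:2308.09645 — 2 statements merged into one kernel-verified Lean document; each statement's English description precedes it below -/
import Mathlib

section
/- If G is a finite connected simple graph with dmg(G) = 1, then rad(G) = 2. -/
open SimpleGraph

/-!
Formalization of the game of Cops and Robber (one cop, one robber) and the damage number.

Round 0: the cop chooses a starting vertex, then the robber chooses a starting vertex.
In each subsequent round the cop moves to an adjacent vertex or passes, after which the
robber moves to an adjacent vertex or passes.  Strategies are modelled as functions of
the full history of positions (most recent first).
-/

/-- A cop strategy: an initial vertex together with a move function taking the history of
cop positions (most recent first, nonempty) and of robber positions (most recent first)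
to the cop's next position. -/
structure CopStrategy (V : Type*) where
  init : V
  move : List V → List V → V

/-- A robber strategy: an initial vertex chosen in response to the cop's initial vertex,
together with a move function taking the history of cop positions (most recent first,
including the cop's move from the current round) and of robber positions (most recent
first) to the robber's next position. -/
structure RobberStrategy (V : Type*) where
  init : V → V
  move : List V → List V → V

variable {V : Type*}

/-- A cop move function is legal for `G` if from any position it either passes or
moves along an edge of `G`. -/
def LegalCopMove (G : SimpleGraph V) (cs : List V → List V → V) : Prop :=
  ∀ (c : V) (ch rh : List V), cs (c :: ch) rh = c ∨ G.Adj c (cs (c :: ch) rh)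

/-- A robber move function is legal for `G` if from any position it either passes or
moves along an edge of `G`. -/
def LegalRobMove (G : SimpleGraph V) (rs : List V → List V → V) : Prop :=
  ∀ (r : V) (ch rh : List V), rs ch (r :: rh) = r ∨ G.Adj r (rs ch (r :: rh))

/-- A legal cop strategy: every move passes or goes along an edge. -/
def CopStrategy.Legal (G : SimpleGraph V) (CS : CopStrategy V) : Prop :=
  LegalCopMove G CS.move

/-- A legal robber strategy: every move passes or goes along an edge. -/
def RobberStrategy.Legal (G : SimpleGraph V) (RS : RobberStrategy V) : Prop :=
  LegalRobMove G RS.move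

/-- `play CS RS n = (cₙ, rₙ, earlier cop positions, earlier robber positions)`:
the state of the game after round `n`, when the cop plays `CS` and the robber plays `RS`.
In each round the cop moves first, then the robber moves. -/
def play (CS : CopStrategy V) (RS : RobberStrategy V) : ℕ → V × V × List V × List V
  | 0 => (CS.init, RS.init CS.init, [], [])
  | n + 1 =>
    let p := play CS RS n
    let c := CS.move (p.1 :: p.2.2.1) (p.2.1 :: p.2.2.2)
    let r := RS.move (c :: p.1 :: p.2.2.1) (p.2.1 :: p.2.2.2)
    (c, r, p.1 :: p.2.2.1, p.2.1 :: p.2.2.2)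

/-- The cop's position after its move in round `n`. -/
def copPos (CS : CopStrategy V) (RS : RobberStrategy V) (n : ℕ) : V := (play CS RS n).1

/-- The robber's position after its move in round `n`. -/
def robPos (CS : CopStrategy V) (RS : RobberStrategy V) (n : ℕ) : V := (play CS RS n).2.1

/-- The robber damages `v`: at the end of some round `n` the robber occupies `v`, having
never been captured up to that point (neither by moving onto the cop, nor by the cop's
move in any round up to and including round `n + 1`); it then passes or moves in
round `n + 1`, damaging `v`. -/
def Damages (CS : CopStrategy V) (RS : RobberStrategy V) (v : V) : Prop :=
  ∃ n, robPos CS RS n = v ∧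
    ∀ k ≤ n, copPos CS RS k ≠ robPos CS RS k ∧ copPos CS RS (k + 1) ≠ robPos CS RS k

/-- The set of vertices damaged by the robber during the play of `CS` against `RS`. -/
def damageSet (CS : CopStrategy V) (RS : RobberStrategy V) : Set V :=
  {v | Damages CS RS v}

/-- The damage number of `G`: the minimum over legal cop strategies of the maximum over
legal robber strategies of the number of distinct damaged vertices. -/
noncomputable def dmg (G : SimpleGraph V) : ℕ :=
  sInf { n | ∃ CS : CopStrategy V, CS.Legal G ∧
    ∀ RS : RobberStrategy V, RS.Legal G → (damageSet CS RS).ncard ≤ n }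

/-- A cop strategy passes during the first round. -/
def CopStrategy.PassesFirst (CS : CopStrategy V) : Prop :=
  ∀ r : V, CS.move [CS.init] [r] = CS.init

/-- The damage number of `G` when the cop is required to pass during the first round. -/
noncomputable def dmg' (G : SimpleGraph V) : ℕ :=
  sInf { n | ∃ CS : CopStrategy V, CS.Legal G ∧ CS.PassesFirst ∧
    ∀ RS : RobberStrategy V, RS.Legal G → (damageSet CS RS).ncard ≤ n }

/-- The eccentricity of a vertex: the maximum distance from `u` to any vertex. -/
noncomputable def ecc (G : SimpleGraph V) (u : V) : ℕ := sSup (Set.range (G.dist u))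

/-- The radius of a graph: the minimum eccentricity over all vertices. -/
noncomputable def gRadius (G : SimpleGraph V) : ℕ := sInf (Set.range (ecc G))

/-!
A cop standing at a vertex of eccentricity at most one steps onto the robber in the first round,
so `dmg G = 1` forces every eccentricity to be at least two. Conversely, let the cop follow an
optimal strategy starting at `c`. After `k` rounds a legal cop is within distance `k` of `c`, so
if some `u` had `dist c u ≥ 3`, a robber starting at a neighbour `y` of `u` (where
`dist c y ≥ 2`) and stepping onto `u` would damage both `y` and `u`; hence `ecc c ≤ 2`.
-/

section Game

variable {V : Type*} {G : SimpleGraph V} {CS : CopStrategy V} {RS : RobberStrategy V}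

lemma copPos_succ (CS : CopStrategy V) (RS : RobberStrategy V) (n : ℕ) :
    copPos CS RS (n + 1) =
      CS.move (copPos CS RS n :: (play CS RS n).2.2.1)
        (robPos CS RS n :: (play CS RS n).2.2.2) := rfl

lemma robPos_succ (CS : CopStrategy V) (RS : RobberStrategy V) (n : ℕ) :
    robPos CS RS (n + 1) =
      RS.move (copPos CS RS (n + 1) :: copPos CS RS n :: (play CS RS n).2.2.1)
        (robPos CS RS n :: (play CS RS n).2.2.2) := rfl

lemma CopStrategy.Legal.copPos_succ_eq_or_adj (hCS : CS.Legal G) (RS : RobberStrategy V)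
    (n : ℕ) :
    copPos CS RS (n + 1) = copPos CS RS n ∨ G.Adj (copPos CS RS n) (copPos CS RS (n + 1)) :=
  hCS _ _ _

lemma RobberStrategy.Legal.robPos_succ_eq_or_adj (hRS : RS.Legal G) (CS : CopStrategy V)
    (n : ℕ) :
    robPos CS RS (n + 1) = robPos CS RS n ∨ G.Adj (robPos CS RS n) (robPos CS RS (n + 1)) :=
  hRS _ _ _

lemma CopStrategy.Legal.dist_init_copPos_le (hCS : CS.Legal G) (RS : RobberStrategy V)
    (n : ℕ) : G.dist CS.init (copPos CS RS n) ≤ n := by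
  suffices ∃ p : G.Walk CS.init (copPos CS RS n), p.length ≤ n by
    obtain ⟨p, hp⟩ := this
    exact (dist_le p).trans hp
  induction n with
  | zero => exact ⟨.nil, le_rfl⟩
  | succ n ih =>
    obtain ⟨p, hp⟩ := ih
    rcases hCS.copPos_succ_eq_or_adj RS n with h | h
    · exact ⟨p.copy rfl h.symm, by rw [Walk.length_copy]; omega⟩
    · exact ⟨p.concat h, by rw [Walk.length_concat]; omega⟩

lemma CopStrategy.Legal.copPos_ne_of_lt_dist (hCS : CS.Legal G) {k : ℕ} {v : V}
    (h : k < G.dist CS.init v) : copPos CS RS k ≠ v := by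
  rintro rfl
  exact (hCS.dist_init_copPos_le RS k).not_gt h

lemma CopStrategy.Legal.damages_robPos_of_lt_dist (hCS : CS.Legal G) {n : ℕ}
    (h : ∀ k ≤ n, k + 1 < G.dist CS.init (robPos CS RS k)) :
    Damages CS RS (robPos CS RS n) :=
  ⟨n, rfl, fun k hk =>
    ⟨hCS.copPos_ne_of_lt_dist (by have := h k hk; omega), hCS.copPos_ne_of_lt_dist (h k hk)⟩⟩

lemma exists_copStrategy_ncard_damageSet_le_dmg (h : dmg G ≠ 0) :
    ∃ CS : CopStrategy V, CS.Legal G ∧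
      ∀ RS : RobberStrategy V, RS.Legal G → (damageSet CS RS).ncard ≤ dmg G :=
  Nat.sInf_mem (Nat.nonempty_of_pos_sInf (Nat.pos_of_ne_zero h))

end Game

section Chase

variable {V : Type*} {G : SimpleGraph V} {w : V} {RS : RobberStrategy V}

open Classical in
noncomputable def CopStrategy.chase (G : SimpleGraph V) (w : V) : CopStrategy V where
  init := w
  move ch rh := if G.Adj (ch.headD w) (rh.headD w) then rh.headD w else ch.headD w

open Classical in
lemma CopStrategy.chase_move_cons (c : V) (ch rh : List V) :
    (chase G w).move (c :: ch) rh = if G.Adj c (rh.headD w) then rh.headD w else c := rfl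

lemma CopStrategy.chase_legal (G : SimpleGraph V) (w : V) : (chase G w).Legal G := by
  intro c ch rh
  rw [chase_move_cons]
  split_ifs with h
  exacts [Or.inr h, Or.inl rfl]

lemma CopStrategy.copPos_chase_succ (hw : ∀ v, v = w ∨ G.Adj w v) (hRS : RS.Legal G) (n : ℕ) :
    copPos (chase G w) RS (n + 1) = robPos (chase G w) RS n := by
  have step : ∀ n, robPos (chase G w) RS n = copPos (chase G w) RS n ∨
      G.Adj (copPos (chase G w) RS n) (robPos (chase G w) RS n) →
      copPos (chase G w) RS (n + 1) = robPos (chase G w) RS n := by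
    intro n h
    rw [copPos_succ, chase_move_cons, List.headD_cons]
    split_ifs with hadj
    · rfl
    · exact (h.resolve_right hadj).symm
  induction n with
  | zero => exact step 0 (hw _)
  | succ n ih => exact step (n + 1) (ih ▸ hRS.robPos_succ_eq_or_adj _ n)

lemma CopStrategy.damageSet_chase_eq_empty (hw : ∀ v, v = w ∨ G.Adj w v) (hRS : RS.Legal G) :
    damageSet (chase G w) RS = ∅ :=
  Set.eq_empty_of_forall_notMem fun _ ⟨n, _, hn⟩ =>
    (hn n le_rfl).2 (copPos_chase_succ hw hRS n)

lemma dmg_eq_zero_of_forall_eq_or_adj (hw : ∀ v, v = w ∨ G.Adj w v) : dmg G = 0 :=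
  Nat.sInf_eq_zero.2 <| .inl ⟨.chase G w, CopStrategy.chase_legal G w, fun RS hRS => by
    simp [CopStrategy.damageSet_chase_eq_empty hw hRS]⟩

end Chase

section Escape

variable {V : Type*} {G : SimpleGraph V} {CS : CopStrategy V}

open Classical in
noncomputable def RobberStrategy.stepTo (y u : V) : RobberStrategy V where
  init _ := y
  move _ rh := if rh.headD y = y then u else rh.headD y

open Classical in
lemma RobberStrategy.stepTo_move_cons (y u r : V) (ch rh : List V) :
    (stepTo y u).move ch (r :: rh) = if r = y then u else r := rfl

lemma RobberStrategy.stepTo_legal {y u : V} (hyu : G.Adj y u) : (stepTo y u).Legal G := by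
  intro r ch rh
  rw [stepTo_move_cons]
  split_ifs with h
  exacts [.inr (h ▸ hyu), .inl rfl]

lemma RobberStrategy.robPos_stepTo_zero (y u : V) : robPos CS (stepTo y u) 0 = y := rfl

lemma RobberStrategy.robPos_stepTo_one (y u : V) : robPos CS (stepTo y u) 1 = u := by
  rw [robPos_succ, stepTo_move_cons, robPos_stepTo_zero, if_pos rfl]

lemma CopStrategy.Legal.two_le_ncard_damageSet_stepTo [Finite V] (hCS : CS.Legal G) {y u : V}
    (hyu : G.Adj y u) (hy : 2 ≤ G.dist CS.init y) (hu : 3 ≤ G.dist CS.init u) :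
    2 ≤ (damageSet CS (.stepTo y u)).ncard := by
  have hdist : ∀ k ≤ 1, k + 1 < G.dist CS.init (robPos CS (.stepTo y u) k) := by
    intro k hk
    interval_cases k
    · rw [RobberStrategy.robPos_stepTo_zero]; omega
    · rw [RobberStrategy.robPos_stepTo_one]; omega
  have hdy := hCS.damages_robPos_of_lt_dist fun k hk => hdist k (hk.trans zero_le_one)
  have hdu := hCS.damages_robPos_of_lt_dist hdist
  rw [RobberStrategy.robPos_stepTo_zero] at hdy
  rw [RobberStrategy.robPos_stepTo_one] at hdu
  calc 2 = ({y, u} : Set V).ncard := (Set.ncard_pair hyu.ne).symm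
    _ ≤ _ := Set.ncard_le_ncard (Set.insert_subset hdy (Set.singleton_subset_iff.2 hdu))

lemma CopStrategy.Legal.dist_init_le_two [Finite V] (hG : G.Connected) (hCS : CS.Legal G)
    (hbound : ∀ RS : RobberStrategy V, RS.Legal G → (damageSet CS RS).ncard ≤ 1) (u : V) :
    G.dist CS.init u ≤ 2 := by
  by_contra! hu
  have : Nontrivial V := nontrivial_of_ne u CS.init fun h => by simp [h] at hu
  obtain ⟨y, huy⟩ := hG.preconnected.exists_adj_of_nontrivial u
  have hy : 2 ≤ G.dist CS.init y := by
    have := hG.dist_triangle (u := CS.init) (v := y) (w := u)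
    rw [dist_eq_one_iff_adj.2 huy.symm] at this
    omega
  have := hbound _ (RobberStrategy.stepTo_legal huy.symm)
  have := hCS.two_le_ncard_damageSet_stepTo huy.symm hy hu
  omega

end Escape

section Radius

variable {V : Type*} {G : SimpleGraph V}

lemma ecc_le_iff [Finite V] {u : V} {k : ℕ} : ecc G u ≤ k ↔ ∀ v, G.dist u v ≤ k :=
  ⟨fun h v => (le_csSup (Set.finite_range _).bddAbove ⟨v, rfl⟩).trans h,
    fun h => csSup_le' (Set.forall_mem_range.2 h)⟩

lemma gRadius_le_ecc (G : SimpleGraph V) (u : V) : gRadius G ≤ ecc G u :=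
  Nat.sInf_le ⟨u, rfl⟩

lemma exists_ecc_eq_gRadius [Nonempty V] (G : SimpleGraph V) : ∃ u, ecc G u = gRadius G :=
  Nat.sInf_mem (Set.range_nonempty _)

lemma SimpleGraph.Connected.eq_or_adj_of_dist_le_one (hG : G.Connected) {u v : V}
    (h : G.dist u v ≤ 1) : v = u ∨ G.Adj u v := by
  rcases Nat.le_one_iff_eq_zero_or_eq_one.1 h with h | h
  exacts [.inl (hG.dist_eq_zero_iff.1 h).symm, .inr (dist_eq_one_iff_adj.1 h)]

end Radius

/-- If `G` is a finite connected graph with `dmg(G) = 1`, then `rad(G) = 2`. -/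
theorem radius_eq_two_of_dmg_eq_one {V : Type*} [Fintype V] (G : SimpleGraph V)
    (hG : G.Connected) (h1 : dmg G = 1) : gRadius G = 2 := by
  have : Nonempty V := hG.nonempty
  obtain ⟨CS, hCS, hbound⟩ := exists_copStrategy_ncard_damageSet_le_dmg (G := G) (by omega)
  have hle : gRadius G ≤ 2 :=
    (gRadius_le_ecc G CS.init).trans (ecc_le_iff.2 (hCS.dist_init_le_two hG (h1 ▸ hbound)))
  obtain ⟨w, hw⟩ := exists_ecc_eq_gRadius G
  have hge : 2 ≤ gRadius G := by
    by_contra! hlt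
    have hdom : ∀ v, v = w ∨ G.Adj w v := fun v =>
      hG.eq_or_adj_of_dist_le_one (ecc_le_iff.1 (by omega) v)
    have := dmg_eq_zero_of_forall_eq_or_adj hdom
    omega
  omega
end

section
/- Let G be a finite connected simple graph with rad(G) ∈ {2,3} and dmg(G) ≠ 1. Then dmg(G) = 2 if and only if there exist vertices z, y ∈ V(G) and s_y ∈ N[z] such that: (1) dist(z,y) ∈ {2,3}; (2) no vertex in N[z] dominates y; (3) for every x ∈ N(y) \ N[s_y] there exist s_x ∈ N[s_y] and v ∈ N[s_x] such that N(x) \ {y} ⊆ N[s_x] and N(y) \ {x} ⊆ N[v]; and, in addition, for every vertex w ∈ V(G) \ {y} with dist(z,w) ∈ {2,3}, either conditions (2) and (3) hold with w in place of y (for some choice of s_w ∈ N[z]), or some vertex of N[z] dominates w. -/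
open SimpleGraph

variable {V : Type*}

/-- The closed neighbourhood `N[v]` of a vertex, as a set. -/
def cN (G : SimpleGraph V) (v : V) : Set V := insert v (G.neighborSet v)

/-- `v` dominates `u` if `N(u) ⊆ N[v]`. -/
def Dominates (G : SimpleGraph V) (v u : V) : Prop :=
  G.neighborSet u ⊆ cN G v

/-- Condition (3) of the damage-number-two characterization, for a robber start `y` and a
first cop move `s_y`: for every `x ∈ N(y) \ N[s_y]` there exist `s_x ∈ N[s_y]` and
`v ∈ N[s_x]` with `N(x) \ {y} ⊆ N[s_x]` and `N(y) \ {x} ⊆ N[v]`. -/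
def Cond3 (G : SimpleGraph V) (y sy : V) : Prop :=
  ∀ x ∈ G.neighborSet y \ cN G sy, ∃ sx ∈ cN G sy, ∃ v ∈ cN G sx,
    G.neighborSet x \ {y} ⊆ cN G sx ∧ G.neighborSet y \ {x} ⊆ cN G v


/-!
The cop starts at `z` and captures whenever the robber is in its closed neighbourhood. A robber
starting at `y` outside `N[z]` is answered by the first move `s_y`; condition (3) says that whenever
the robber steps to some `x ∉ N[s_y]`, the cop can step to `s_x`, which covers every exit from `x`
except back to `y`, and, if the robber does return, on to `v ∈ N[s_x]`, which covers every exit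
from `y` except back to `x`. Shuttling between `s_x` and `v`, the cop confines the robber to
`{y, x}`; when `s_y` dominates `y` the robber cannot move at all. The hypotheses on vertices at
distance two also force every vertex to lie within distance three of `z`.

Conversely, if a cop strategy from `z` allows damage at most two, then condition (3) must hold at
every far start `w` for the cop's first answer `s_w`: otherwise the robber steps to a bad `x` and
then either escapes from `x`, or returns to `w`, which the cop cannot cover together with the
exits from `x`, and escapes from `w` one round later. Some far vertex must be undominated from
`N[z]`, since otherwise the same shuttling cop would keep the damage at one.
-/

variable {G : SimpleGraph V}

section ClosedNeighbourhood

theorem mem_cN {v a : V} : a ∈ cN G v ↔ a = v ∨ G.Adj v a := Iff.rfl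

theorem self_mem_cN (v : V) : v ∈ cN G v := Set.mem_insert v _

theorem mem_cN_comm {a b : V} : a ∈ cN G b ↔ b ∈ cN G a := by
  simp only [mem_cN, G.adj_comm, eq_comm]

theorem dist_le_one_of_mem_cN {s t : V} (h : t ∈ cN G s) : G.dist s t ≤ 1 := by
  rcases mem_cN.1 h with rfl | h
  · simp
  · exact (dist_eq_one_iff_adj.2 h).le

theorem dist_le_dist_add_one_of_mem_cN (u : V) {s t : V} (h : t ∈ cN G s) :
    G.dist u t ≤ G.dist u s + 1 := by
  have hst : G.Reachable s t := by
    rcases mem_cN.1 h with rfl | h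
    · rfl
    · exact h.reachable
  exact (hst.dist_triangle_right u).trans (Nat.add_le_add_left (dist_le_one_of_mem_cN h) _)

theorem cond3_of_dominates {s y : V} (h : Dominates G s y) : Cond3 G y s :=
  fun _ hx => absurd (h hx.1) hx.2

end ClosedNeighbourhood

section Play

variable (CS : CopStrategy V) (RS : RobberStrategy V)

def robHistory (n : ℕ) : List V := robPos CS RS n :: (play CS RS n).2.2.2

theorem robPos_mem_robHistory {k n : ℕ} (h : k ≤ n) :
    robPos CS RS k ∈ robHistory CS RS n := by
  induction n with
  | zero => rw [Nat.le_zero.1 h]; exact List.mem_cons_self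
  | succ n ih =>
    rcases Nat.of_le_succ h with h | rfl
    · exact List.mem_cons_of_mem _ (ih h)
    · exact List.mem_cons_self

variable {CS RS}

theorem copPos_succ_mem_cN (hCS : CS.Legal G) (n : ℕ) :
    copPos CS RS (n + 1) ∈ cN G (copPos CS RS n) :=
  hCS _ _ _

theorem robPos_succ_mem_cN (hRS : RS.Legal G) (n : ℕ) :
    robPos CS RS (n + 1) ∈ cN G (robPos CS RS n) :=
  hRS _ _ _

theorem move_init_mem_cN (hCS : CS.Legal G) (w : V) : CS.move [CS.init] [w] ∈ cN G CS.init :=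
  hCS _ _ _

variable (G CS RS) in
def Evades (n : ℕ) : Prop := ∀ k ≤ n, robPos CS RS k ∉ cN G (copPos CS RS k)

theorem Evades.mono {m n : ℕ} (h : Evades G CS RS n) (hmn : m ≤ n) : Evades G CS RS m :=
  fun k hk => h k (hk.trans hmn)

theorem evades_zero (h : robPos CS RS 0 ∉ cN G CS.init) : Evades G CS RS 0 := by
  intro k hk
  rw [Nat.le_zero.1 hk]
  exact h

theorem Evades.succ {n : ℕ} (h : Evades G CS RS n)
    (h' : robPos CS RS (n + 1) ∉ cN G (copPos CS RS (n + 1))) : Evades G CS RS (n + 1) := by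
  intro k hk
  rcases Nat.of_le_succ hk with hk | rfl
  · exact h k hk
  · exact h'

theorem mem_damageSet_of_evades (hCS : CS.Legal G) {n : ℕ} (h : Evades G CS RS n) :
    robPos CS RS n ∈ damageSet CS RS := by
  refine ⟨n, rfl, fun k hk => ⟨fun heq => h k hk (heq ▸ self_mem_cN _), fun heq => ?_⟩⟩
  exact h k hk (heq ▸ copPos_succ_mem_cN hCS k)

end Play

section Moves

open Classical in
noncomputable def moveTo (G : SimpleGraph V) (a b : V) : V := if G.Adj a b then b else a

theorem moveTo_eq_or_adj (a b : V) : moveTo G a b ∈ cN G a := by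
  unfold moveTo
  split_ifs with h
  · exact Or.inr h
  · exact Or.inl rfl

theorem moveTo_of_mem_cN {a b : V} (h : b ∈ cN G a) : moveTo G a b = b := by
  unfold moveTo
  split_ifs with hab
  · rfl
  · exact ((mem_cN.1 h).resolve_right hab).symm

end Moves

section TrackingCop

variable (G) in
open Classical in
noncomputable def trackingCop (z : V) (tgt : List V → V) : CopStrategy V where
  init := z
  move ch rh := moveTo G (ch.headD z)
    (if rh.headD z ∈ cN G (ch.headD z) then rh.headD z else tgt rh)

variable {z : V} {tgt : List V → V} {RS : RobberStrategy V}

theorem trackingCop_legal : (trackingCop G z tgt).Legal G :=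
  fun _ _ _ => moveTo_eq_or_adj _ _

local notation "cp" => copPos (trackingCop G z tgt) RS
local notation "rp" => robPos (trackingCop G z tgt) RS
local notation "rh" => robHistory (trackingCop G z tgt) RS

open Classical in
theorem trackingCop_copPos_succ (n : ℕ) :
    cp (n + 1) = moveTo G (cp n) (if rp n ∈ cN G (cp n) then rp n else tgt (rh n)) := rfl

theorem trackingCop_captures {n : ℕ} (h : rp n ∈ cN G (cp n)) : cp (n + 1) = rp n := by
  rw [trackingCop_copPos_succ, if_pos h, moveTo_of_mem_cN h]

theorem trackingCop_follows {n : ℕ} (h : rp n ∉ cN G (cp n)) (ht : tgt (rh n) ∈ cN G (cp n)) :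
    cp (n + 1) = tgt (rh n) := by
  rw [trackingCop_copPos_succ, if_neg h, moveTo_of_mem_cN ht]

theorem exists_evades_of_mem_damageSet {v : V} (hv : v ∈ damageSet (trackingCop G z tgt) RS) :
    ∃ n, rp n = v ∧ Evades G (trackingCop G z tgt) RS n := by
  obtain ⟨n, hn, hsafe⟩ := hv
  exact ⟨n, hn, fun k hk hmem => (hsafe k hk).2 (trackingCop_captures hmem)⟩

theorem trackingCop_invariant (hRS : RS.Legal G) (P : List V → Prop)
    (hinit : rp 0 ∉ cN G z → P [rp 0] ∧ tgt [rp 0] ∈ cN G z)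
    (hstep : ∀ a h a', P (a :: h) → a' ∈ cN G a → a' ∉ cN G (tgt (a :: h)) →
      P (a' :: a :: h) ∧ tgt (a' :: a :: h) ∈ cN G (tgt (a :: h))) :
    ∀ n, Evades G (trackingCop G z tgt) RS n →
      P (rh n) ∧ cp (n + 1) = tgt (rh n) := by
  intro n hn
  induction n with
  | zero =>
    obtain ⟨hP, hz⟩ := hinit (hn 0 le_rfl)
    exact ⟨hP, trackingCop_follows (hn 0 le_rfl) hz⟩
  | succ n ih =>
    obtain ⟨hP, hcop⟩ := ih (hn.mono n.le_succ)
    have hout := hn (n + 1) le_rfl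
    rw [hcop] at hout
    obtain ⟨hP', hnext⟩ := hstep _ _ _ hP (robPos_succ_mem_cN hRS n) hout
    refine ⟨hP', trackingCop_follows (hn (n + 1) le_rfl) ?_⟩
    rwa [hcop]

end TrackingCop

section Confinement

def Confined (G : SimpleGraph V) (r s : V) (S : Set V) : Prop :=
  ∀ a ∈ S, a ≠ r → G.Adj r a ∧ a ∉ cN G s ∧ S ⊆ {r, a}

variable {r s : V} {S : Set V}

theorem confined_of_subset_pair {x : V} (hx : x = r ∨ (G.Adj r x ∧ x ∉ cN G s))
    (hS : S ⊆ {r, x}) : Confined G r s S := by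
  intro a ha har
  obtain rfl : a = x := (hS ha).resolve_left har
  exact ⟨(hx.resolve_left har).1, (hx.resolve_left har).2, hS⟩

theorem Confined.ncard_le_two (h : Confined G r s S) : S.ncard ≤ 2 := by
  obtain ⟨x, hx⟩ : ∃ x, S ⊆ {r, x} := by
    by_cases hS : ∃ a ∈ S, a ≠ r
    · obtain ⟨a, ha, har⟩ := hS
      exact ⟨a, (h a ha har).2.2⟩
    · exact ⟨r, fun a ha => Or.inl (by_contra fun har => hS ⟨a, ha, har⟩)⟩
  calc S.ncard ≤ ({r, x} : Set V).ncard := Set.ncard_le_ncard hx (Set.toFinite _)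
    _ ≤ 2 := (Set.ncard_insert_le r {x}).trans (by rw [Set.ncard_singleton])

theorem Confined.subset_singleton (h : Confined G r s S) (hdom : Dominates G s r) : S ⊆ {r} := by
  intro a ha
  by_contra har
  exact (h a ha har).2.1 (hdom (h a ha har).1)

/-- With the robber at `r` and the cop at `s`, `SX x` answers the robber's step to `x` and `VV x`
its step back to `r`. -/
def GuardsExcursions (G : SimpleGraph V) (r s : V) (SX VV : V → V) : Prop :=
  ∀ x ∈ G.neighborSet r \ cN G s, SX x ∈ cN G s ∧ VV x ∈ cN G (SX x) ∧
    G.neighborSet x \ {r} ⊆ cN G (SX x) ∧ G.neighborSet r \ {x} ⊆ cN G (VV x)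

theorem Cond3.exists_guardsExcursions (h : Cond3 G r s) :
    ∃ SX VV : V → V, GuardsExcursions G r s SX VV := by
  choose! SX hSX VV hVV hsub using h
  exact ⟨SX, VV, fun x hx => ⟨hSX x hx, hVV x hx, hsub x hx⟩⟩

open Classical in
noncomputable def returnTarget (r s : V) (VV : V → V) : List V → V
  | [] => s
  | a :: h => if a = r then returnTarget r s VV h else VV a

open Classical in
noncomputable def excursionTarget (r s : V) (SX VV : V → V) : List V → V
  | [] => s
  | a :: h => if a = r then returnTarget r s VV h else SX a

theorem returnTarget_cases (VV : V → V) (h : List V) :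
    (returnTarget r s VV h = s ∧ ∀ x ∈ h, x = r) ∨
      ∃ x ∈ h, x ≠ r ∧ returnTarget r s VV h = VV x := by
  induction h with
  | nil => exact Or.inl ⟨rfl, by simp⟩
  | cons a h ih =>
    by_cases har : a = r
    · rw [returnTarget, if_pos har]
      rcases ih with ⟨hs, hall⟩ | ⟨x, hx, hxr, hV⟩
      · exact Or.inl ⟨hs, List.forall_mem_cons.2 ⟨har, hall⟩⟩
      · exact Or.inr ⟨x, List.mem_cons_of_mem a hx, hxr, hV⟩
    · exact Or.inr ⟨a, List.mem_cons_self, har, by rw [returnTarget, if_neg har]⟩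

theorem confined_cons {l : List V} {x a : V} (hx : x = r ∨ (G.Adj r x ∧ x ∉ cN G s))
    (hl : {y | y ∈ l} ⊆ {r, x}) (ha : a = r ∨ a = x) : Confined G r s {y | y ∈ a :: l} :=
  confined_of_subset_pair hx fun y hy => (List.mem_cons.1 hy).elim (· ▸ ha) (@hl y)

variable {SX VV : V → V} {a a' : V} {h : List V}

theorem excursionTarget_step_of_ne (hg : GuardsExcursions G r s SX VV) (har : a ≠ r)
    (hconf : Confined G r s {x | x ∈ a :: h}) (ha' : a' ∈ cN G a)
    (hesc : a' ∉ cN G (excursionTarget r s SX VV (a :: h))) :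
    Confined G r s {x | x ∈ a' :: a :: h} ∧
      excursionTarget r s SX VV (a' :: a :: h) ∈ cN G (excursionTarget r s SX VV (a :: h)) := by
  obtain ⟨hadj, has, hsub⟩ := hconf a List.mem_cons_self har
  obtain ⟨-, hVV, hN, -⟩ := hg a ⟨hadj, has⟩
  simp only [excursionTarget, if_neg har] at hesc ⊢
  have ha'a : a' = r ∨ a' = a := by
    by_contra! hne
    exact hesc (hN ⟨(mem_cN.1 ha').resolve_left hne.2, hne.1⟩)
  refine ⟨confined_cons (Or.inr ⟨hadj, has⟩) hsub ha'a, ?_⟩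
  rcases ha'a with rfl | rfl
  · rw [if_pos rfl, returnTarget, if_neg har]
    exact hVV
  · rw [if_neg har]
    exact self_mem_cN _

theorem excursionTarget_step_of_eq (hg : GuardsExcursions G r s SX VV)
    (hconf : Confined G r s {x | x ∈ r :: h}) (ha' : a' ∈ cN G r)
    (hesc : a' ∉ cN G (excursionTarget r s SX VV (r :: h))) :
    Confined G r s {x | x ∈ a' :: r :: h} ∧
      excursionTarget r s SX VV (a' :: r :: h) ∈ cN G (excursionTarget r s SX VV (r :: h)) := by
  rcases returnTarget_cases (s := s) VV h with ⟨hs, hall⟩ | ⟨x, hx, hxr, hV⟩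
  · have hsub : {y | y ∈ r :: h} ⊆ {r, r} := fun y hy =>
      Or.inl ((List.mem_cons.1 hy).elim id (hall y))
    simp only [excursionTarget, hs] at hesc ⊢
    rcases mem_cN.1 ha' with rfl | hadj
    · simp only [returnTarget, hs]
      exact ⟨confined_cons (Or.inl rfl) hsub (Or.inl rfl), self_mem_cN s⟩
    · rw [if_neg hadj.ne']
      exact ⟨confined_cons (Or.inr ⟨hadj, hesc⟩) (hsub.trans (by simp)) (Or.inr rfl),
        (hg a' ⟨hadj, hesc⟩).1⟩
  · obtain ⟨hadj, hxs, hsub⟩ := hconf x (List.mem_cons_of_mem r hx) hxr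
    obtain ⟨-, hVV, -, hN⟩ := hg x ⟨hadj, hxs⟩
    simp only [excursionTarget, hV] at hesc ⊢
    have ha'x : a' = r ∨ a' = x := by
      by_contra! hne
      exact hesc (hN ⟨(mem_cN.1 ha').resolve_left hne.1, hne.2⟩)
    refine ⟨confined_cons (Or.inr ⟨hadj, hxs⟩) hsub ha'x, ?_⟩
    rcases ha'x with rfl | rfl
    · simp only [returnTarget, hV]
      exact self_mem_cN _
    · rw [if_neg hxr]
      exact mem_cN_comm.1 hVV

theorem excursionTarget_step (hg : GuardsExcursions G r s SX VV)
    (hconf : Confined G r s {x | x ∈ a :: h}) (ha' : a' ∈ cN G a)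
    (hesc : a' ∉ cN G (excursionTarget r s SX VV (a :: h))) :
    Confined G r s {x | x ∈ a' :: a :: h} ∧
      excursionTarget r s SX VV (a' :: a :: h) ∈ cN G (excursionTarget r s SX VV (a :: h)) := by
  rcases eq_or_ne a r with rfl | har
  · exact excursionTarget_step_of_eq hg hconf ha' hesc
  · exact excursionTarget_step_of_ne hg har hconf ha' hesc

end Confinement

section ConfiningCop

theorem confined_damageSet_trackingCop {z r s : V} {tgt : List V → V} {RS : RobberStrategy V}
    (h : ∀ n, Evades G (trackingCop G z tgt) RS n →
      Confined G r s {x | x ∈ robHistory (trackingCop G z tgt) RS n}) :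
    Confined G r s (damageSet (trackingCop G z tgt) RS) := by
  intro a ha har
  obtain ⟨n, rfl, hn⟩ := exists_evades_of_mem_damageSet ha
  obtain ⟨hadj, has, -⟩ := h n hn _ (robPos_mem_robHistory _ _ le_rfl) har
  refine ⟨hadj, has, fun b hb => ?_⟩
  obtain ⟨m, rfl, hm⟩ := exists_evades_of_mem_damageSet hb
  obtain ⟨N, hN, hnN, hmN⟩ : ∃ N, Evades G _ RS N ∧ n ≤ N ∧ m ≤ N :=
    (le_total n m).elim (fun h => ⟨m, hm, h, le_rfl⟩) (fun h => ⟨n, hn, le_rfl, h⟩)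
  exact (h N hN _ (robPos_mem_robHistory _ _ hnN) har).2.2 (robPos_mem_robHistory _ _ hmN)

theorem exists_cop_confining (z : V) (T : V → V)
    (hT : ∀ w ∉ cN G z, T w ∈ cN G z ∧ Cond3 G w (T w)) :
    ∃ CS : CopStrategy V, CS.Legal G ∧ ∀ RS : RobberStrategy V, RS.Legal G →
      damageSet CS RS = ∅ ∨ ∃ r ∉ cN G z, Confined G r (T r) (damageSet CS RS) := by
  choose! SX VV hg using fun w (hw : w ∉ cN G z) => (hT w hw).2.exists_guardsExcursions
  let tgt : List V → V := fun h =>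
    excursionTarget (h.getLast?.getD z) (T (h.getLast?.getD z)) (SX (h.getLast?.getD z))
      (VV (h.getLast?.getD z)) h
  refine ⟨trackingCop G z tgt, trackingCop_legal, fun RS hRS => ?_⟩
  set r := robPos (trackingCop G z tgt) RS 0
  by_cases hr : r ∈ cN G z
  · refine Or.inl (Set.eq_empty_of_forall_notMem fun v hv => ?_)
    obtain ⟨n, -, hn⟩ := exists_evades_of_mem_damageSet hv
    exact hn 0 (Nat.zero_le n) hr
  refine Or.inr ⟨r, hr, confined_damageSet_trackingCop fun n hn => ?_⟩
  have htgt : ∀ h, h.getLast? = some r →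
      tgt h = excursionTarget r (T r) (SX r) (VV r) h := by
    intro h hh
    simp only [tgt, hh, Option.getD_some]
  refine ((trackingCop_invariant hRS
    (fun h => h.getLast? = some r ∧ Confined G r (T r) {x | x ∈ h}) ?_ ?_) n hn).1.2
  · intro _
    refine ⟨⟨rfl, confined_of_subset_pair (Or.inl rfl) fun x hx =>
      Or.inl (List.mem_singleton.1 hx)⟩, ?_⟩
    rw [htgt _ rfl, excursionTarget, if_pos rfl]
    exact (hT r hr).1
  · rintro a h a' ⟨hlast, hconf⟩ ha' hesc
    have hlast' : (a' :: a :: h).getLast? = some r := by rwa [List.getLast?_cons_cons]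
    rw [htgt _ hlast] at hesc ⊢
    rw [htgt _ hlast']
    exact (excursionTarget_step (hg r hr) hconf ha' hesc).imp_left (⟨hlast', ·⟩)

end ConfiningCop

section Distance

theorem Walk.dist_getVert_of_length_eq_dist {u v : V} {p : G.Walk u v}
    (hp : p.length = G.dist u v) {i : ℕ} (hi : i ≤ p.length) : G.dist u (p.getVert i) = i := by
  have hle : G.dist u (p.getVert i) ≤ i := by
    simpa [Walk.take_length, hi] using dist_le (p.take i)
  have hrest : G.dist (p.getVert i) v ≤ p.length - i := by
    simpa [Walk.drop_length] using dist_le (p.drop i)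
  have := (p.take i).reachable.dist_triangle_left v
  omega

theorem dist_le_three_of_forall_cond3 (hG : G.Connected) {z : V}
    (h : ∀ w, G.dist z w = 2 → ∃ s ∈ cN G z, Cond3 G w s) (u : V) : G.dist z u ≤ 3 := by
  by_contra! hu
  obtain ⟨p, hp⟩ := hG.exists_walk_length_eq_dist z u
  have hd : ∀ i ≤ 4, G.dist z (p.getVert i) = i := fun i hi =>
    Walk.dist_getVert_of_length_eq_dist hp (by omega)
  have hadj : ∀ i < 4, G.Adj (p.getVert i) (p.getVert (i + 1)) := fun i hi =>
    p.adj_getVert_succ (by omega)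
  obtain ⟨s, hs, hc⟩ := h _ (hd 2 (by norm_num))
  have hball : ∀ t ∈ cN G s, G.dist z t ≤ 2 := fun t ht => by
    have := dist_le_dist_add_one_of_mem_cN z ht
    have := dist_le_one_of_mem_cN hs
    omega
  -- `p.getVert 3` lies outside `N[s]`, so `Cond3` covers its neighbour `p.getVert 4`, at distance
  -- 4 from `z`, from some `sx ∈ N[s]`, within distance 3 of `z`.
  have h3 : p.getVert 3 ∉ cN G s := fun hmem => by
    have := hball _ hmem
    have := hd 3 (by norm_num)
    omega
  obtain ⟨sx, hsx, -, -, hsub, -⟩ := hc (p.getVert 3) ⟨hadj 2 (by norm_num), h3⟩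
  have h4 : p.getVert 4 ∈ cN G sx := hsub ⟨hadj 3 (by norm_num), fun heq => by
    have := hd 4 le_rfl
    rw [Set.mem_singleton_iff.1 heq, hd 2 (by norm_num)] at this
    omega⟩
  have := dist_le_dist_add_one_of_mem_cN z h4
  have := hball sx hsx
  have := hd 4 le_rfl
  omega

theorem dist_eq_two_or_three_of_not_mem_cN (hG : G.Connected) {z w : V}
    (h : ∀ w, G.dist z w = 2 → ∃ s ∈ cN G z, Cond3 G w s) (hw : w ∉ cN G z) :
    G.dist z w = 2 ∨ G.dist z w = 3 := by
  have h1 := hG.one_lt_dist_of_ne_of_not_adj (fun h => hw (Or.inl h.symm)) (hw ∘ Or.inr)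
  have h3 := dist_le_three_of_forall_cond3 hG h w
  omega

theorem not_mem_cN_of_dist {z w : V} (h : G.dist z w = 2 ∨ G.dist z w = 3) : w ∉ cN G z := by
  intro hw
  have := dist_le_one_of_mem_cN hw
  omega

end Distance

section CopUpperBounds

theorem exists_cop_ncard_damageSet_le_two (hG : G.Connected) {z : V}
    (h : ∀ w, G.dist z w = 2 ∨ G.dist z w = 3 → ∃ s ∈ cN G z, Cond3 G w s) :
    ∃ CS : CopStrategy V, CS.Legal G ∧
      ∀ RS : RobberStrategy V, RS.Legal G → (damageSet CS RS).ncard ≤ 2 := by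
  have hfar := fun w (hw : w ∉ cN G z) =>
    h w (dist_eq_two_or_three_of_not_mem_cN hG (fun w hw => h w (Or.inl hw)) hw)
  choose! T hT using hfar
  obtain ⟨CS, hCS, hconf⟩ := exists_cop_confining z T hT
  refine ⟨CS, hCS, fun RS hRS => ?_⟩
  rcases hconf RS hRS with hempty | ⟨r, -, hr⟩
  · simp [hempty]
  · exact hr.ncard_le_two

theorem exists_cop_ncard_damageSet_le_one (hG : G.Connected) {z : V}
    (h : ∀ w, G.dist z w = 2 ∨ G.dist z w = 3 → ∃ s ∈ cN G z, Dominates G s w) :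
    ∃ CS : CopStrategy V, CS.Legal G ∧
      ∀ RS : RobberStrategy V, RS.Legal G → (damageSet CS RS).ncard ≤ 1 := by
  have hfar := fun w (hw : w ∉ cN G z) =>
    h w (dist_eq_two_or_three_of_not_mem_cN hG
      (fun w hw => (h w (Or.inl hw)).imp fun _ => And.imp_right cond3_of_dominates) hw)
  choose! T hT using hfar
  obtain ⟨CS, hCS, hconf⟩ :=
    exists_cop_confining z T fun w hw => ⟨(hT w hw).1, cond3_of_dominates (hT w hw).2⟩
  refine ⟨CS, hCS, fun RS hRS => ?_⟩
  rcases hconf RS hRS with hempty | ⟨r, hr, hconf⟩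
  · simp [hempty]
  · calc (damageSet CS RS).ncard ≤ ({r} : Set V).ncard :=
          Set.ncard_le_ncard (hconf.subset_singleton (hT r hr).2) (Set.toFinite _)
      _ = 1 := Set.ncard_singleton r

end CopUpperBounds

section RobberLowerBounds

def stayingRobber (v : V) : RobberStrategy V := ⟨fun _ => v, fun _ rh => rh.headD v⟩

theorem stayingRobber_legal (v : V) : (stayingRobber v).Legal G :=
  fun _ _ _ => Or.inl rfl

theorem exists_not_mem_cN_of_two_le_gRadius (hrad : 2 ≤ gRadius G) (c : V) :
    ∃ v, v ∉ cN G c := by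
  by_contra! hall
  have : Nonempty V := ⟨c⟩
  have hecc : ecc G c ≤ 1 :=
    csSup_le (Set.range_nonempty _) (by rintro _ ⟨v, rfl⟩; exact dist_le_one_of_mem_cN (hall v))
  have : gRadius G ≤ ecc G c := Nat.sInf_le ⟨c, rfl⟩
  omega

theorem exists_robber_damageSet_nonempty (hrad : 2 ≤ gRadius G) {CS : CopStrategy V}
    (hCS : CS.Legal G) :
    ∃ RS : RobberStrategy V, RS.Legal G ∧ (damageSet CS RS).Nonempty := by
  obtain ⟨v, hv⟩ := exists_not_mem_cN_of_two_le_gRadius hrad CS.init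
  exact ⟨stayingRobber v, stayingRobber_legal v, _,
    mem_damageSet_of_evades hCS (evades_zero hv)⟩

open Classical in
noncomputable def escape (G : SimpleGraph V) (r avoid c d : V) : V :=
  if h : ¬ G.neighborSet r \ {avoid} ⊆ cN G c then (Set.not_subset.1 h).choose else d

theorem escape_spec {r avoid c d : V} (h : ¬ G.neighborSet r \ {avoid} ⊆ cN G c) :
    escape G r avoid c d ∈ G.neighborSet r \ {avoid} ∧ escape G r avoid c d ∉ cN G c := by
  rw [escape, dif_pos h]
  exact (Set.not_subset.1 h).choose_spec

theorem escape_of_subset {r avoid c d : V} (h : G.neighborSet r \ {avoid} ⊆ cN G c) :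
    escape G r avoid c d = d := by
  rw [escape, dif_neg (not_not.2 h)]

/-- Rounds 1, 2, 3 are recognised by the length of the robber's history: step to `x`; then leave
the cop's closed neighbourhood from `x` if possible, and otherwise return to `w` and leave it
from `w` in the next round. -/
noncomputable def threeDamageRobber (G : SimpleGraph V) (w x : V) : RobberStrategy V where
  init _ := w
  move ch rh := moveTo G (rh.headD w) <| match rh with
    | [_] => x
    | [_, _] => escape G x w (ch.headD w) w
    | [_, _, _] => escape G w x (ch.headD w) w
    | _ => rh.headD w

theorem threeDamageRobber_legal (w x : V) : (threeDamageRobber G w x).Legal G :=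
  fun _ _ _ => moveTo_eq_or_adj _ _

theorem exists_robber_two_lt_ncard_damageSet [Finite V] {CS : CopStrategy V} (hCS : CS.Legal G)
    {w : V} (hw : w ∉ cN G CS.init) (hc : ¬ Cond3 G w (CS.move [CS.init] [w])) :
    ∃ RS : RobberStrategy V, RS.Legal G ∧ 2 < (damageSet CS RS).ncard := by
  simp only [Cond3, not_forall, not_exists, not_and, exists_prop] at hc
  obtain ⟨x, hx, H⟩ := hc
  let RS := threeDamageRobber G w x
  refine ⟨RS, threeDamageRobber_legal w x, (Set.two_lt_ncard_iff (Set.toFinite _)).2 ?_⟩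
  have e0 : Evades G CS RS 0 := evades_zero hw
  have hr1 : robPos CS RS 1 = x := moveTo_of_mem_cN (Or.inr hx.1)
  have e1 : Evades G CS RS 1 := e0.succ (hr1 ▸ hx.2)
  have hc2 := copPos_succ_mem_cN (RS := RS) hCS 1
  have hr2 : robPos CS RS 2 = moveTo G (robPos CS RS 1) (escape G x w (copPos CS RS 2) w) := rfl
  rw [hr1] at hr2
  have hdmg := fun n (h : Evades G CS RS n) => mem_damageSet_of_evades hCS h
  by_cases hA : G.neighborSet x \ {w} ⊆ cN G (copPos CS RS 2)
  · -- The robber returns to `w`, which the cop cannot cover while also guarding `x`.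
    have hw2 : w ∉ cN G (copPos CS RS 2) := fun hmem =>
      H _ hc2 w hmem hA fun a ha => Or.inr ha.1
    rw [escape_of_subset hA, moveTo_of_mem_cN (Or.inr hx.1.symm)] at hr2
    have e2 : Evades G CS RS 2 := e1.succ (hr2 ▸ hw2)
    obtain ⟨hw', hw'c⟩ := escape_spec (d := w)
      (H _ hc2 _ (copPos_succ_mem_cN (RS := RS) hCS 2) hA)
    have hr3 : robPos CS RS 3 = moveTo G (robPos CS RS 2) (escape G w x (copPos CS RS 3) w) := rfl
    rw [hr2, moveTo_of_mem_cN (Or.inr hw'.1)] at hr3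
    have e3 : Evades G CS RS 3 := e2.succ (hr3 ▸ hw'c)
    refine ⟨w, x, robPos CS RS 3, hdmg 0 e0, hr1 ▸ hdmg 1 e1, hdmg 3 e3, hx.1.ne, ?_, ?_⟩
    · rw [hr3]; exact hw'.1.ne
    · rw [hr3]; exact fun h => hw'.2 h.symm
  · obtain ⟨hx', hx'c⟩ := escape_spec (d := w) hA
    rw [moveTo_of_mem_cN (Or.inr hx'.1)] at hr2
    have e2 : Evades G CS RS 2 := e1.succ (hr2 ▸ hx'c)
    refine ⟨w, x, robPos CS RS 2, hdmg 0 e0, hr1 ▸ hdmg 1 e1, hdmg 2 e2, hx.1.ne, ?_, ?_⟩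
    · rw [hr2]; exact fun h => hx'.2 h.symm
    · rw [hr2]; exact hx'.1.ne

end RobberLowerBounds

section DamageNumber

theorem dmg_le_of_forall {CS : CopStrategy V} (hCS : CS.Legal G) {n : ℕ}
    (h : ∀ RS : RobberStrategy V, RS.Legal G → (damageSet CS RS).ncard ≤ n) : dmg G ≤ n :=
  Nat.sInf_le ⟨CS, hCS, h⟩

theorem exists_cop_of_dmg_pos (h : 0 < dmg G) :
    ∃ CS : CopStrategy V, CS.Legal G ∧
      ∀ RS : RobberStrategy V, RS.Legal G → (damageSet CS RS).ncard ≤ dmg G :=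
  Nat.sInf_mem (Nat.nonempty_of_pos_sInf h)

theorem dmg_pos [Finite V] (hrad : 2 ≤ gRadius G) {CS : CopStrategy V} (hCS : CS.Legal G)
    {n : ℕ} (h : ∀ RS : RobberStrategy V, RS.Legal G → (damageSet CS RS).ncard ≤ n) :
    0 < dmg G := by
  rw [Nat.pos_iff_ne_zero, Ne, dmg, Nat.sInf_eq_zero]
  rintro (⟨CS', hCS', h0⟩ | hempty)
  · obtain ⟨RS, hRS, hne⟩ := exists_robber_damageSet_nonempty hrad hCS'
    exact hne.ne_empty ((Set.ncard_eq_zero (Set.toFinite _)).1 (Nat.le_zero.1 (h0 RS hRS)))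
  · exact hempty.subset ⟨CS, hCS, h⟩

theorem cond3_of_forall_ncard_damageSet_le_two [Finite V] {CS : CopStrategy V} (hCS : CS.Legal G)
    (h : ∀ RS : RobberStrategy V, RS.Legal G → (damageSet CS RS).ncard ≤ 2) {w : V}
    (hw : w ∉ cN G CS.init) : Cond3 G w (CS.move [CS.init] [w]) := by
  by_contra hc
  obtain ⟨RS, hRS, h3⟩ := exists_robber_two_lt_ncard_damageSet hCS hw hc
  exact (h RS hRS).not_gt h3

end DamageNumber

/-- Characterization of graphs with damage number two among finite connected graphs of
radius `2` or `3` whose damage number is not `1`. -/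
theorem dmg_eq_two_iff {V : Type*} [Fintype V] (G : SimpleGraph V) (hG : G.Connected)
    (hrad : gRadius G = 2 ∨ gRadius G = 3) (hd1 : dmg G ≠ 1) :
    dmg G = 2 ↔ ∃ z y sy : V, sy ∈ cN G z ∧
      (G.dist z y = 2 ∨ G.dist z y = 3) ∧
      (¬ ∃ s ∈ cN G z, Dominates G s y) ∧
      Cond3 G y sy ∧
      ∀ w : V, w ≠ y → (G.dist z w = 2 ∨ G.dist z w = 3) →
        (((¬ ∃ s ∈ cN G z, Dominates G s w) ∧ ∃ sw ∈ cN G z, Cond3 G w sw) ∨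
          ∃ s ∈ cN G z, Dominates G s w) := by
  constructor
  · intro h2
    obtain ⟨CS, hCS, hbound⟩ := exists_cop_of_dmg_pos (G := G) (by omega)
    have hcond3 := fun w => cond3_of_forall_ncard_damageSet_le_two hCS (h2 ▸ hbound) (w := w)
    obtain ⟨y, hy, hndom⟩ : ∃ y, (G.dist CS.init y = 2 ∨ G.dist CS.init y = 3) ∧
        ¬ ∃ s ∈ cN G CS.init, Dominates G s y := by
      by_contra! hdom
      obtain ⟨CS', hCS', h1⟩ := exists_cop_ncard_damageSet_le_one hG hdom
      have := dmg_le_of_forall hCS' h1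
      omega
    refine ⟨CS.init, y, _, move_init_mem_cN hCS y, hy, hndom, hcond3 y (not_mem_cN_of_dist hy),
      fun w _ hw => ?_⟩
    by_cases hdom : ∃ s ∈ cN G CS.init, Dominates G s w
    · exact Or.inr hdom
    · exact Or.inl ⟨hdom, _, move_init_mem_cN hCS w, hcond3 w (not_mem_cN_of_dist hw)⟩
  · rintro ⟨z, y, sy, hsy, -, -, hy, hall⟩
    have hcond : ∀ w, G.dist z w = 2 ∨ G.dist z w = 3 → ∃ s ∈ cN G z, Cond3 G w s := by
      intro w hw
      rcases eq_or_ne w y with rfl | hwy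
      · exact ⟨sy, hsy, hy⟩
      rcases hall w hwy hw with ⟨-, h⟩ | ⟨s, hs, hd⟩
      exacts [h, ⟨s, hs, cond3_of_dominates hd⟩]
    obtain ⟨CS, hCS, hbound⟩ := exists_cop_ncard_damageSet_le_two hG hcond
    have := dmg_le_of_forall hCS hbound
    have := dmg_pos (by omega) hCS hbound
    omega
end
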